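/- Let A : V → V be linear with I - A invertible, b ∈ V, Φ̄ the fixed point of x ↦ A x - b. Given Φ^0, set ΔΦ^0 = AΦ^0 - b - Φ^0, ΔΦ^1 = A ΔΦ^0, τ ∈ ℝ with τ ≠ 1, and ΔΨ^0 = ΔΦ^1 - τ ΔΦ^0. Then Φ̄ = Φ^0 + (1/(1-τ)) ΔΦ^0 + ((1/(1-τ)) (I - A)⁻¹) ΔΨ^0. -/

import Mathlib

/-! The residual `ΔΦ⁰` is `(I - A)(Φ̄ - Φ⁰)`, so `Φ̄ = Φ⁰ + (I - A)⁻¹ ΔΦ⁰`. Since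
`(I - A)⁻¹ A = (I - A)⁻¹ - I`, the preconditioned residual `(I - A)⁻¹ ΔΨ⁰` equals
`(1 - τ) (I - A)⁻¹ ΔΦ⁰ - ΔΦ⁰`, which can be solved for `(I - A)⁻¹ ΔΦ⁰`. -/

namespace Module.End

variable {R K M : Type*} [AddCommGroup M]

section Semiring

variable [Semiring R] [Module R M] {A B : Module.End R M}

theorem apply_sub_apply_of_mul_one_sub_eq_one (hB : B * (1 - A) = 1) (x : M) :
    B (x - A x) = x := by
  simpa using LinearMap.congr_fun hB x

theorem apply_apply_of_mul_one_sub_eq_one (hB : B * (1 - A) = 1) (x : M) :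
    B (A x) = B x - x := by
  calc B (A x) = B (x - (x - A x)) := by rw [sub_sub_cancel]
    _ = B x - x := by rw [map_sub, apply_sub_apply_of_mul_one_sub_eq_one hB]

theorem fixedPoint_eq_add_apply_residual_of_mul_one_sub_eq_one (hB : B * (1 - A) = 1)
    {b Φbar : M} (hbar : Φbar = A Φbar - b) (Φ0 : M) :
    Φbar = Φ0 + B (A Φ0 - b - Φ0) := by
  have residual : (Φbar - Φ0) - A (Φbar - Φ0) = A Φ0 - b - Φ0 := by
    rw [map_sub, (eq_sub_iff_add_eq.mp hbar).symm]
    abel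
  rw [← residual, apply_sub_apply_of_mul_one_sub_eq_one hB, add_sub_cancel]

end Semiring

theorem apply_eq_smul_add_smul_apply_of_mul_one_sub_eq_one [Field K] [Module K M]
    {A B : Module.End K M} (hB : B * (1 - A) = 1)
    {τ : K} (hτ : τ ≠ 1) (x : M) :
    B x = (1 / (1 - τ)) • x + (1 / (1 - τ)) • B (A x - τ • x) := by
  have hτ' : (1 : K) - τ ≠ 0 := sub_ne_zero.mpr hτ.symm
  rw [map_sub, map_smul, apply_apply_of_mul_one_sub_eq_one hB]
  match_scalars
  · field_simp
  · ring

end Module.End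

open Module.End in
theorem fixpoint_decomposition_general
    (N : ℕ) (A B : Module.End ℝ (Fin N → ℝ))
    (hB2 : B * (1 - A) = 1)
    (b : Fin N → ℝ)
    (Φbar : Fin N → ℝ) (hbar : Φbar = A Φbar - b)
    (Φ0 : Fin N → ℝ)
    (ΔΦ0 : Fin N → ℝ) (h0 : ΔΦ0 = A Φ0 - b - Φ0)
    (ΔΦ1 : Fin N → ℝ) (h1 : ΔΦ1 = A ΔΦ0)
    (τ : ℝ) (hτ : τ ≠ 1)
    (ΔΨ0 : Fin N → ℝ) (hΨ : ΔΨ0 = ΔΦ1 - τ • ΔΦ0) :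
    Φbar = Φ0 + (1 / (1 - τ)) • ΔΦ0 + (1 / (1 - τ)) • B ΔΨ0 := by
  rw [fixedPoint_eq_add_apply_residual_of_mul_one_sub_eq_one hB2 hbar Φ0, ← h0,
    apply_eq_smul_add_smul_apply_of_mul_one_sub_eq_one hB2 hτ ΔΦ0, hΨ, h1, add_assoc]

theorem fixpoint_decomposition
    (N : ℕ) (A B : Module.End ℝ (Fin N → ℝ))
    (hB1 : (1 - A) * B = 1) (hB2 : B * (1 - A) = 1)
    (b : Fin N → ℝ)
    (Φbar : Fin N → ℝ) (hbar : Φbar = A Φbar - b)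
    (Φ0 : Fin N → ℝ)
    (ΔΦ0 : Fin N → ℝ) (h0 : ΔΦ0 = A Φ0 - b - Φ0)
    (ΔΦ1 : Fin N → ℝ) (h1 : ΔΦ1 = A ΔΦ0)
    (τ : ℝ) (hτ : τ ≠ 1)
    (ΔΨ0 : Fin N → ℝ) (hΨ : ΔΨ0 = ΔΦ1 - τ • ΔΦ0) :
    Φbar = Φ0 + (1 / (1 - τ)) • ΔΦ0 + (1 / (1 - τ)) • B ΔΨ0 :=
  fixpoint_decomposition_general N A B hB2 b Φbar hbar Φ0 ΔΦ0 h0 ΔΦ1 h1 τ hτ ΔΨ0 hΨ
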